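/- If φ is an automorphism of the unit disk, then the composition operator C_φ on the Dirichlet space is essentially normal, i.e. the self-commutator [C_φ*, C_φ] = C_φ* C_φ - C_φ C_φ* is compact. -/

import Mathlib

open Complex MeasureTheory Metric Filter Set

noncomputable section

/-- The open unit disk in `ℂ`. -/
def unitD : Set ℂ := Metric.ball 0 1

/-- The reproducing kernel of the Dirichlet space. -/
def Kker (w z : ℂ) : ℂ := 1 + Complex.log (1 / (1 - (starRingEnd ℂ) w * z))

/-- The Dirichlet inner product. -/
def dInner (f g : ℂ → ℂ) : ℂ :=
  f 0 * (starRingEnd ℂ) (g 0) +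
    (Real.pi : ℂ)⁻¹ * ∫ z in unitD, deriv f z * (starRingEnd ℂ) (deriv g z)

/-- The square of the Dirichlet norm. -/
def dNormSq (f : ℂ → ℂ) : ℝ :=
  ‖f 0‖ ^ 2 + (Real.pi)⁻¹ * ∫ z in unitD, ‖deriv f z‖ ^ 2

/-- The Dirichlet norm. -/
def dNorm (f : ℂ → ℂ) : ℝ := Real.sqrt (dNormSq f)

/-- Membership in the Dirichlet space. -/
def MemDirichlet (f : ℂ → ℂ) : Prop :=
  DifferentiableOn ℂ f unitD ∧ IntegrableOn (fun z => ‖deriv f z‖ ^ 2) unitD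

/-- An operator on the Dirichlet space is compact iff it maps bounded weakly
null sequences to norm null sequences. -/
def CompactOnD (T : (ℂ → ℂ) → (ℂ → ℂ)) : Prop :=
  ∀ f : ℕ → ℂ → ℂ, (∀ n, MemDirichlet (f n)) → (∀ n, dNorm (f n) ≤ 1) →
    (∀ g, MemDirichlet g → Tendsto (fun n => dInner (f n) g) atTop (nhds 0)) →
    Tendsto (fun n => dNorm (T (f n))) atTop (nhds 0)

/-- Boundedness of an operator on the Dirichlet space. -/
def BoundedOnD (T : (ℂ → ℂ) → (ℂ → ℂ)) : Prop :=
  (∀ f, MemDirichlet f → MemDirichlet (T f)) ∧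
    ∃ C : ℝ, ∀ f, MemDirichlet f → dNorm (T f) ≤ C * dNorm f

/-! The adjoint of `C_φ` is computed on reproducing kernels. Writing `ψ = φ⁻¹` and `b = φ 0`,
the factorisation `(1 - w̄ φ(z))(1 - ā z) = (1 - conj (ψ w) z)(1 - w̄ b)` gives
`K_w ∘ φ = K_{ψ w} - K_a + K_w(b)`, hence `C_φ* g = g ∘ ψ - g(a) + g(0) K_b`. The self-commutator
is then the finite-rank operator `g ↦ g(b) K_b + g(0) K_a + (g(a) - 2 g(0) - g(0) K_b(b))`.
Point evaluations are inner products with kernels, so they vanish in the limit along a weakly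
null sequence, and the commutator maps such a sequence to a norm null one.
For `φ = mobius e a` one has `ψ = mobius (conj e) (e * a)` and `b = e * a`. -/

open scoped ComplexConjugate

lemma isOpen_unitD : IsOpen unitD := isOpen_ball

lemma measurableSet_unitD : MeasurableSet unitD := measurableSet_ball

lemma zero_mem_unitD : (0 : ℂ) ∈ unitD := mem_ball_self one_pos

def mobius (e a : ℂ) (z : ℂ) : ℂ := e * ((a - z) / (1 - conj a * z))

lemma norm_conj_mul_lt_one {u z : ℂ} (hu : ‖u‖ < 1) (hz : ‖z‖ < 1) : ‖conj u * z‖ < 1 := by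
  rw [norm_mul, RCLike.norm_conj]
  nlinarith [norm_nonneg u, norm_nonneg z]

lemma one_sub_ne_zero_of_norm_lt_one {v : ℂ} (hv : ‖v‖ < 1) : 1 - v ≠ 0 := by
  rw [sub_ne_zero]
  rintro rfl
  simp at hv

lemma norm_sub_lt_norm_one_sub_conj_mul {u z : ℂ} (hu : ‖u‖ < 1) (hz : ‖z‖ < 1) :
    ‖u - z‖ < ‖1 - conj u * z‖ := by
  have key : ‖1 - conj u * z‖ ^ 2 - ‖u - z‖ ^ 2 = (1 - ‖u‖ ^ 2) * (1 - ‖z‖ ^ 2) := by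
    apply Complex.ofReal_injective
    push_cast [← Complex.conj_mul']
    simp only [map_sub, map_mul, map_one, Complex.conj_conj]
    ring
  have hu2 : 0 < 1 - ‖u‖ ^ 2 := by nlinarith [norm_nonneg u]
  have hz2 : 0 < 1 - ‖z‖ ^ 2 := by nlinarith [norm_nonneg z]
  exact lt_of_pow_lt_pow_left₀ 2 (norm_nonneg _) (by nlinarith [mul_pos hu2 hz2])

section Mobius

variable {e a : ℂ}

lemma norm_mobius_lt_one (he : ‖e‖ = 1) (ha : ‖a‖ < 1) {z : ℂ} (hz : ‖z‖ < 1) :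
    ‖mobius e a z‖ < 1 := by
  have h := norm_sub_lt_norm_one_sub_conj_mul ha hz
  rw [mobius, norm_mul, he, one_mul, norm_div, div_lt_one ((norm_nonneg _).trans_lt h)]
  exact h

lemma norm_mul_lt_one_of_norm_eq_one (he : ‖e‖ = 1) (ha : ‖a‖ < 1) : ‖e * a‖ < 1 := by
  rwa [norm_mul, he, one_mul]

lemma conj_mul_self_of_norm_eq_one (he : ‖e‖ = 1) : conj e * e = 1 := by
  rw [Complex.conj_mul', he]; norm_num

lemma mobius_mul_one_sub_conj_mul {z : ℂ} (hz : 1 - conj a * z ≠ 0) :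
    mobius e a z * (1 - conj a * z) = e * (a - z) := by
  rw [mobius, mul_assoc, div_mul_cancel₀ _ hz]

lemma mobius_mobius_inv (he : ‖e‖ = 1) (ha : ‖a‖ < 1) {w : ℂ} (hw : ‖w‖ < 1) :
    mobius e a (mobius (conj e) (e * a) w) = w := by
  have hea : ‖e * a‖ < 1 := norm_mul_lt_one_of_norm_eq_one he ha
  set t := mobius (conj e) (e * a) w
  have ht : ‖t‖ < 1 := norm_mobius_lt_one (by rwa [RCLike.norm_conj]) hea hw
  have hD := one_sub_ne_zero_of_norm_lt_one (norm_conj_mul_lt_one hea hw)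
  have htD := mobius_mul_one_sub_conj_mul (e := conj e) hD
  rw [mobius, mul_div_assoc', div_eq_iff (one_sub_ne_zero_of_norm_lt_one
    (norm_conj_mul_lt_one ha ht))]
  apply mul_right_cancel₀ hD
  rw [map_mul] at htD ⊢
  linear_combination (w * conj a - e) * htD + (w - e * a) * conj_mul_self_of_norm_eq_one he

lemma mobius_inv_mobius (he : ‖e‖ = 1) (ha : ‖a‖ < 1) {z : ℂ} (hz : ‖z‖ < 1) :
    mobius (conj e) (e * a) (mobius e a z) = z := by
  have h := mobius_mobius_inv (e := conj e) (a := e * a) (by rwa [RCLike.norm_conj])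
    (norm_mul_lt_one_of_norm_eq_one he ha) hz
  rwa [Complex.conj_conj, ← mul_assoc, conj_mul_self_of_norm_eq_one he, one_mul] at h

lemma one_sub_conj_mul_mobius_mul (he : ‖e‖ = 1) (ha : ‖a‖ < 1) {w z : ℂ} (hw : ‖w‖ < 1)
    (hz : ‖z‖ < 1) :
    (1 - conj w * mobius e a z) * (1 - conj a * z)
      = (1 - conj (mobius (conj e) (e * a) w) * z) * (1 - conj w * (e * a)) := by
  have hea : ‖e * a‖ < 1 := norm_mul_lt_one_of_norm_eq_one he ha
  have hz' := mobius_mul_one_sub_conj_mul (e := e)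
    (one_sub_ne_zero_of_norm_lt_one (norm_conj_mul_lt_one ha hz))
  have hw' := congrArg conj (mobius_mul_one_sub_conj_mul (e := conj e)
    (one_sub_ne_zero_of_norm_lt_one (norm_conj_mul_lt_one hea hw)))
  simp only [map_mul, map_sub, map_one, Complex.conj_conj] at hw'
  linear_combination (-conj w) * hz' + z * hw' + (conj a * z) * conj_mul_self_of_norm_eq_one he

@[simp]
lemma mobius_apply_self : mobius e a a = 0 := by simp [mobius]

@[simp]
lemma mobius_apply_zero : mobius e a 0 = e * a := by simp [mobius]

lemma mapsTo_mobius (he : ‖e‖ = 1) (ha : ‖a‖ < 1) : MapsTo (mobius e a) unitD unitD :=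
  fun _ hz => mem_ball_zero_iff.2 (norm_mobius_lt_one he ha (mem_ball_zero_iff.1 hz))

lemma injOn_mobius (he : ‖e‖ = 1) (ha : ‖a‖ < 1) : InjOn (mobius e a) unitD :=
  LeftInvOn.injOn (f₁' := mobius (conj e) (e * a)) fun _ hz =>
    mobius_inv_mobius he ha (mem_ball_zero_iff.1 hz)

lemma differentiableAt_mobius (ha : ‖a‖ < 1) {z : ℂ} (hz : ‖z‖ < 1) :
    DifferentiableAt ℂ (mobius e a) z := by
  have hD := one_sub_ne_zero_of_norm_lt_one (norm_conj_mul_lt_one ha hz)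
  unfold mobius
  fun_prop (disch := exact hD)

end Mobius

lemma Complex.log_mul_of_re_pos {x y : ℂ} (hx : 0 < x.re) (hy : 0 < y.re) :
    Complex.log (x * y) = Complex.log x + Complex.log y := by
  have hx' := abs_lt.1 (Complex.abs_arg_lt_pi_div_two_iff.2 (Or.inl hx))
  have hy' := abs_lt.1 (Complex.abs_arg_lt_pi_div_two_iff.2 (Or.inl hy))
  refine Complex.log_mul (Complex.ne_zero_of_re_pos hx) (Complex.ne_zero_of_re_pos hy)
    ⟨by linarith, by linarith⟩

lemma Complex.re_one_sub_pos {v : ℂ} (hv : ‖v‖ < 1) : 0 < (1 - v).re := by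
  have := (abs_le.1 (Complex.abs_re_le_norm v)).2
  simp only [Complex.sub_re, Complex.one_re]
  linarith

lemma Complex.one_sub_mem_slitPlane {v : ℂ} (hv : ‖v‖ < 1) : 1 - v ∈ Complex.slitPlane :=
  Or.inl (re_one_sub_pos hv)

lemma Kker_eq_one_sub_log {w z : ℂ} (h : ‖conj w * z‖ < 1) :
    Kker w z = 1 - Complex.log (1 - conj w * z) := by
  rw [Kker, one_div, Complex.log_inv _ (Complex.slitPlane_arg_ne_pi (one_sub_mem_slitPlane h))]
  ring

@[simp]
lemma Kker_zero_left (z : ℂ) : Kker 0 z = 1 := by simp [Kker]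

lemma conj_Kker {w z : ℂ} (h : ‖conj w * z‖ < 1) : conj (Kker w z) = Kker z w := by
  have h' : ‖conj z * w‖ < 1 := by simpa [mul_comm] using h
  rw [Kker_eq_one_sub_log h, Kker_eq_one_sub_log h', map_sub, map_one,
    ← Complex.log_conj _ (Complex.slitPlane_arg_ne_pi (one_sub_mem_slitPlane h))]
  simp [mul_comm]

lemma Kker_mobius {e a w z : ℂ} (he : ‖e‖ = 1) (ha : ‖a‖ < 1) (hw : ‖w‖ < 1) (hz : ‖z‖ < 1) :
    Kker w (mobius e a z) = Kker (mobius (conj e) (e * a) w) z - Kker a z + Kker w (e * a) := by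
  have hea : ‖e * a‖ < 1 := norm_mul_lt_one_of_norm_eq_one he ha
  have h1 := norm_conj_mul_lt_one hw (norm_mobius_lt_one he ha hz)
  have h2 := norm_conj_mul_lt_one
    (norm_mobius_lt_one (by rwa [RCLike.norm_conj]) hea hw) hz
  have h3 := norm_conj_mul_lt_one ha hz
  have h4 := norm_conj_mul_lt_one hw hea
  have hlog := congrArg Complex.log (one_sub_conj_mul_mobius_mul he ha hw hz)
  rw [log_mul_of_re_pos (re_one_sub_pos h1) (re_one_sub_pos h3),
    log_mul_of_re_pos (re_one_sub_pos h2) (re_one_sub_pos h4)] at hlog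
  rw [Kker_eq_one_sub_log h1, Kker_eq_one_sub_log h2, Kker_eq_one_sub_log h3,
    Kker_eq_one_sub_log h4]
  linear_combination -hlog

lemma dInner_eq_conj (f g : ℂ → ℂ) : dInner f g = conj (dInner g f) := by
  simp only [dInner, map_add, map_mul, map_inv₀, Complex.conj_ofReal, Complex.conj_conj,
    ← integral_conj, mul_comm]

namespace MemDirichlet

variable {f g : ℂ → ℂ}

lemma differentiableAt (hf : MemDirichlet f) {z : ℂ} (hz : z ∈ unitD) :
    DifferentiableAt ℂ f z :=
  hf.1.differentiableAt (isOpen_unitD.mem_nhds hz)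

lemma memLp_deriv (hf : MemDirichlet f) : MemLp (deriv f) 2 (volume.restrict unitD) :=
  (memLp_two_iff_integrable_sq_norm
    ((hf.1.analyticOnNhd isOpen_unitD).deriv.continuousOn.aestronglyMeasurable
      measurableSet_unitD)).2 hf.2

lemma integrableOn_deriv_mul_conj (hf : MemDirichlet f) (hg : MemDirichlet g) :
    IntegrableOn (fun z => deriv f z * conj (deriv g z)) unitD :=
  hf.memLp_deriv.integrable_mul hg.memLp_deriv.star

end MemDirichlet

lemma deriv_eq_of_eqOn_unitD {u v : ℂ → ℂ} (h : EqOn u v unitD) {z : ℂ} (hz : z ∈ unitD) :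
    deriv u z = deriv v z :=
  (eventuallyEq_of_mem (isOpen_unitD.mem_nhds hz) h).deriv_eq

lemma dInner_congr_right {g u v : ℂ → ℂ} (h : EqOn u v unitD) : dInner g u = dInner g v := by
  rw [dInner, dInner, h zero_mem_unitD, setIntegral_congr_fun measurableSet_unitD
    fun z hz => by rw [deriv_eq_of_eqOn_unitD h hz]]

lemma dNormSq_congr {u v : ℂ → ℂ} (h : EqOn u v unitD) : dNormSq u = dNormSq v := by
  rw [dNormSq, dNormSq, h zero_mem_unitD, setIntegral_congr_fun measurableSet_unitD
    fun z hz => by rw [deriv_eq_of_eqOn_unitD h hz]]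

lemma dNormSq_nonneg (f : ℂ → ℂ) : 0 ≤ dNormSq f := by
  have := Real.pi_pos
  have : 0 ≤ ∫ z in unitD, ‖deriv f z‖ ^ 2 := integral_nonneg fun _ => by positivity
  unfold dNormSq
  positivity

lemma dInner_sub_add_const {g u v : ℂ → ℂ} (hg : MemDirichlet g) (hu : MemDirichlet u)
    (hv : MemDirichlet v) (c : ℂ) :
    dInner g (fun z => u z - v z + c) = dInner g u - dInner g v + g 0 * conj c := by
  have hint : ∫ z in unitD, deriv g z * conj (deriv (fun z => u z - v z + c) z)
      = ∫ z in unitD, (deriv g z * conj (deriv u z) - deriv g z * conj (deriv v z)) := by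
    refine setIntegral_congr_fun measurableSet_unitD fun z hz => ?_
    rw [deriv_add_const, deriv_fun_sub (hu.differentiableAt hz) (hv.differentiableAt hz), map_sub,
      mul_sub]
  rw [dInner, dInner, dInner, hint, integral_sub (hg.integrableOn_deriv_mul_conj hu)
    (hg.integrableOn_deriv_mul_conj hv)]
  simp only [map_add, map_sub]
  ring

lemma dNormSq_mul_add_mul_add_const_le {u v : ℂ → ℂ} (hu : MemDirichlet u)
    (hv : MemDirichlet v) (p q r : ℂ) :
    dNormSq (fun z => p * u z + q * v z + r)
      ≤ ‖p * u 0 + q * v 0 + r‖ ^ 2 + Real.pi⁻¹ * (2 * ‖p‖ ^ 2 * (∫ z in unitD, ‖deriv u z‖ ^ 2)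
          + 2 * ‖q‖ ^ 2 * ∫ z in unitD, ‖deriv v z‖ ^ 2) := by
  have hpt : ∀ z ∈ unitD, ‖deriv (fun z => p * u z + q * v z + r) z‖ ^ 2
      ≤ 2 * ‖p‖ ^ 2 * ‖deriv u z‖ ^ 2 + 2 * ‖q‖ ^ 2 * ‖deriv v z‖ ^ 2 := by
    intro z hz
    have hu' := hu.differentiableAt hz
    have hv' := hv.differentiableAt hz
    rw [deriv_add_const, deriv_fun_add (hu'.const_mul p) (hv'.const_mul q),
      deriv_const_mul p hu', deriv_const_mul q hv']
    calc ‖p * deriv u z + q * deriv v z‖ ^ 2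
        ≤ (‖p * deriv u z‖ + ‖q * deriv v z‖) ^ 2 := by gcongr; exact norm_add_le _ _
      _ ≤ 2 * (‖p * deriv u z‖ ^ 2 + ‖q * deriv v z‖ ^ 2) := add_sq_le
      _ = _ := by rw [norm_mul, norm_mul]; ring
  have hint := integral_mono_of_nonneg (.of_forall fun _ => by positivity)
    ((hu.2.const_mul (2 * ‖p‖ ^ 2)).add (hv.2.const_mul (2 * ‖q‖ ^ 2)))
    ((ae_restrict_iff' measurableSet_unitD).2 (.of_forall hpt))
  rw [integral_add' (hu.2.const_mul _) (hv.2.const_mul _), integral_const_mul,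
    integral_const_mul] at hint
  unfold dNormSq
  gcongr

lemma Complex.det_restrictScalars_toSpanSingleton (c : ℂ) :
    ((ContinuousLinearMap.toSpanSingleton ℂ c).restrictScalars ℝ).det = Complex.normSq c := by
  rw [ContinuousLinearMap.det, ← Algebra.norm_complex_apply, Algebra.norm_apply]
  congr 1
  exact LinearMap.ext fun z => by simp [mul_comm]

lemma MemDirichlet.comp {f φ : ℂ → ℂ} (hf : MemDirichlet f) (hφ : DifferentiableOn ℂ φ unitD)
    (hinj : InjOn φ unitD) (hmaps : MapsTo φ unitD unitD) : MemDirichlet (f ∘ φ) := by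
  refine ⟨hf.1.comp hφ hmaps, ?_⟩
  have hφ' : ∀ x ∈ unitD, DifferentiableAt ℂ φ x :=
    fun x hx => hφ.differentiableAt (isOpen_unitD.mem_nhds hx)
  have hchange := (integrableOn_image_iff_integrableOn_abs_det_fderiv_smul volume
    measurableSet_unitD (fun x hx =>
      ((hφ' x hx).hasDerivAt.hasFDerivAt.restrictScalars ℝ).hasFDerivWithinAt)
    hinj fun w => ‖deriv f w‖ ^ 2).1 (hf.2.mono_set (image_subset_iff.2 hmaps))
  refine hchange.congr_fun (fun x hx => ?_) measurableSet_unitD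
  dsimp only
  rw [Complex.det_restrictScalars_toSpanSingleton, abs_of_nonneg (Complex.normSq_nonneg _),
    smul_eq_mul, deriv_comp x (hf.differentiableAt (hmaps hx)) (hφ' x hx), norm_mul, mul_pow,
    Complex.normSq_eq_norm_sq, mul_comm]

lemma MemDirichlet.comp_mobius {e a : ℂ} (he : ‖e‖ = 1) (ha : ‖a‖ < 1) {f : ℂ → ℂ}
    (hf : MemDirichlet f) : MemDirichlet (f ∘ mobius e a) :=
  hf.comp (fun _ hz =>
      (differentiableAt_mobius ha (mem_ball_zero_iff.1 hz)).differentiableWithinAt)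
    (injOn_mobius he ha) (mapsTo_mobius he ha)

section Adjoint

variable {e a : ℂ} {A : (ℂ → ℂ) → (ℂ → ℂ)}

lemma adjoint_apply_of_mobius (he : ‖e‖ = 1) (ha : ‖a‖ < 1)
    (hKmem : ∀ w ∈ unitD, MemDirichlet (Kker w))
    (hrep : ∀ f, MemDirichlet f → ∀ w ∈ unitD, dInner f (Kker w) = f w)
    (hA : ∀ g, MemDirichlet g → MemDirichlet (A g))
    (hadj : ∀ f g, MemDirichlet f → MemDirichlet g →
      dInner (f ∘ mobius e a) g = dInner f (A g))
    (g : ℂ → ℂ) (hg : MemDirichlet g) (w : ℂ) (hw : w ∈ unitD) :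
    A g w = g (mobius (conj e) (e * a) w) - g a + g 0 * Kker (e * a) w := by
  have hw' := mem_ball_zero_iff.1 hw
  have hea : ‖e * a‖ < 1 := norm_mul_lt_one_of_norm_eq_one he ha
  have hψw := mapsTo_mobius (by rwa [RCLike.norm_conj]) hea hw
  have ha' : a ∈ unitD := mem_ball_zero_iff.2 ha
  have hKcomp : EqOn (Kker w ∘ mobius e a)
      (fun z => Kker (mobius (conj e) (e * a) w) z - Kker a z + Kker w (e * a)) unitD :=
    fun z hz => Kker_mobius he ha hw' (mem_ball_zero_iff.1 hz)
  calc A g w = dInner g (Kker w ∘ mobius e a) := by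
        rw [← hrep _ (hA g hg) w hw, dInner_eq_conj, ← hadj _ _ (hKmem w hw) hg,
          ← dInner_eq_conj]
    _ = _ := by
        rw [dInner_congr_right hKcomp, dInner_sub_add_const hg (hKmem _ hψw) (hKmem a ha'),
          hrep g hg _ hψw, hrep g hg a ha', conj_Kker (norm_conj_mul_lt_one hw' hea)]

lemma commutator_apply_of_mobius (he : ‖e‖ = 1) (ha : ‖a‖ < 1)
    (hAform : ∀ g, MemDirichlet g → ∀ w ∈ unitD,
      A g w = g (mobius (conj e) (e * a) w) - g a + g 0 * Kker (e * a) w)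
    {g : ℂ → ℂ} (hg : MemDirichlet g) {w : ℂ} (hw : w ∈ unitD) :
    A (g ∘ mobius e a) w - A g (mobius e a w)
      = g (e * a) * Kker (e * a) w + g 0 * Kker a w
        + (g a - 2 * g 0 - g 0 * Kker (e * a) (e * a)) := by
  have hw' := mem_ball_zero_iff.1 hw
  have hea : ‖e * a‖ < 1 := norm_mul_lt_one_of_norm_eq_one he ha
  have hKφ : Kker (e * a) (mobius e a w) = 1 - Kker a w + Kker (e * a) (e * a) := by
    rw [Kker_mobius he ha hea hw', mobius_apply_self, Kker_zero_left]
  rw [hAform _ (hg.comp_mobius he ha) w hw, hAform g hg _ (mapsTo_mobius he ha hw),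
    mobius_inv_mobius he ha hw', hKφ]
  simp only [Function.comp_apply, mobius_mobius_inv he ha hw', mobius_apply_self,
    mobius_apply_zero]
  ring

end Adjoint

lemma tendsto_dNorm_of_eqOn_mul_add_mul_add_const {u v : ℂ → ℂ} (hu : MemDirichlet u)
    (hv : MemDirichlet v) {T : ℕ → ℂ → ℂ} {p q r : ℕ → ℂ} (hp : Tendsto p atTop (nhds 0))
    (hq : Tendsto q atTop (nhds 0)) (hr : Tendsto r atTop (nhds 0))
    (hT : ∀ n, EqOn (T n) (fun z => p n * u z + q n * v z + r n) unitD) :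
    Tendsto (fun n => dNorm (T n)) atTop (nhds 0) := by
  set bound : ℂ × ℂ × ℂ → ℝ := fun x => ‖x.1 * u 0 + x.2.1 * v 0 + x.2.2‖ ^ 2
    + Real.pi⁻¹ * (2 * ‖x.1‖ ^ 2 * (∫ z in unitD, ‖deriv u z‖ ^ 2)
      + 2 * ‖x.2.1‖ ^ 2 * ∫ z in unitD, ‖deriv v z‖ ^ 2)
  have hbound : Tendsto (fun n => bound (p n, q n, r n)) atTop (nhds 0) := by
    have hcont : Continuous bound := by fun_prop
    simpa [bound, Function.comp_def] using
      (hcont.tendsto 0).comp (hp.prodMk_nhds (hq.prodMk_nhds hr))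
  have hsq : Tendsto (fun n => dNormSq (T n)) atTop (nhds 0) :=
    squeeze_zero (fun n => dNormSq_nonneg _) (fun n => (dNormSq_congr (hT n)).trans_le
      (dNormSq_mul_add_mul_add_const_le hu hv _ _ _)) hbound
  simpa [dNorm] using hsq.sqrt

theorem composition_operator_essentially_normal_general
    (a : ℂ) (ha : ‖a‖ < 1)
    (θ : ℝ)
    (φ : ℂ → ℂ)
    (hφ : φ = fun z => Complex.exp (θ * Complex.I) *
      ((a - z) / (1 - (starRingEnd ℂ) a * z)))
    (hKmem : ∀ w ∈ unitD, MemDirichlet (Kker w))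
    (hrep : ∀ f, MemDirichlet f → ∀ w ∈ unitD, dInner f (Kker w) = f w)
    (A : (ℂ → ℂ) → (ℂ → ℂ))
    (hA : ∀ g, MemDirichlet g → MemDirichlet (A g))
    (hadj : ∀ f g, MemDirichlet f → MemDirichlet g →
      dInner (f ∘ φ) g = dInner f (A g)) :
    CompactOnD (fun f => A (f ∘ φ) - (A f) ∘ φ) := by
  set e := Complex.exp (θ * Complex.I)
  have he : ‖e‖ = 1 := by simp [e, Complex.norm_exp]
  obtain rfl : φ = mobius e a := hφ
  have hAform := adjoint_apply_of_mobius he ha hKmem hrep hA hadj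
  intro f hf _ hweak
  have hpt : ∀ w ∈ unitD, Tendsto (fun n => f n w) atTop (nhds 0) := fun w hw => by
    simpa only [hrep _ (hf _) w hw] using hweak _ (hKmem w hw)
  have hea : e * a ∈ unitD := mem_ball_zero_iff.2 (norm_mul_lt_one_of_norm_eq_one he ha)
  have ha' : a ∈ unitD := mem_ball_zero_iff.2 ha
  refine tendsto_dNorm_of_eqOn_mul_add_mul_add_const (hKmem _ hea) (hKmem a ha') (hpt _ hea)
    (hpt 0 zero_mem_unitD) ?_ fun n w hw => commutator_apply_of_mobius he ha hAform (hf n) hw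
  simpa using ((hpt a ha').sub ((hpt 0 zero_mem_unitD).const_mul 2)).sub
    ((hpt 0 zero_mem_unitD).mul_const (Kker (e * a) (e * a)))

theorem composition_operator_essentially_normal
    (a : ℂ) (ha : ‖a‖ < 1)
    (θ : ℝ) (hθ : θ ∈ Set.Ioc (-Real.pi) Real.pi)
    (φ : ℂ → ℂ)
    (hφ : φ = fun z => Complex.exp (θ * Complex.I) *
      ((a - z) / (1 - (starRingEnd ℂ) a * z)))
    (hKmem : ∀ w ∈ unitD, MemDirichlet (Kker w))
    (hrep : ∀ f, MemDirichlet f → ∀ w ∈ unitD, dInner f (Kker w) = f w)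
    (A : (ℂ → ℂ) → (ℂ → ℂ))
    (hA : ∀ g, MemDirichlet g → MemDirichlet (A g))
    (hadj : ∀ f g, MemDirichlet f → MemDirichlet g →
      dInner (f ∘ φ) g = dInner f (A g)) :
    CompactOnD (fun f => A (f ∘ φ) - (A f) ∘ φ) :=
  composition_operator_essentially_normal_general a ha θ φ hφ hKmem hrep A hA hadj
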